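/- arXiv:1806.02994 — 2 statements merged into one kernel-verified Lean document; each statement's English description precedes it below -/
import Mathlib

section
/- Let Γ be a discrete abelian group, N ≥ 1 an integer and E ⊆ Γ. The following are equivalent: (1) E is N-PR; (2) whenever γ_1, …, γ_n ∈ E are distinct and m_1, …, m_n ∈ ℤ satisfy γ_1^{m_1}⋯γ_n^{m_n} = 1, then N divides m_i for every i. -/
open scoped DirectSum

/-- A subset `E` of a discrete abelian group `Γ` is `N`-PR (`N`-pseudo-Rademacher) if every
function `φ : E → 𝕋` taking values in the `N`-th roots of unity is the restriction of a
character of `Γ`. -/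
def IsNPR {Γ : Type*} [CommGroup Γ] (N : ℕ) (E : Set Γ) : Prop :=
  ∀ φ : Γ → Circle, (∀ γ ∈ E, φ γ ^ N = 1) →
    ∃ χ : Γ →* Circle, ∀ γ ∈ E, χ γ = φ γ

open Complex Real

/-- The circle is a divisible group (written additively). -/
noncomputable instance : DivisibleBy (Additive Circle) ℤ where
  div a n := Circle.expHom (Complex.arg ((Additive.toMul a : Circle) : ℂ) / (n : ℝ))
  div_zero a := by simp
  div_cancel := by
    intro n a hn
    rw [← map_zsmul]
    have hn' : (n : ℝ) ≠ 0 := Int.cast_ne_zero.mpr hn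
    rw [zsmul_eq_mul, mul_div_cancel₀ _ hn']
    show Additive.ofMul (Circle.exp (Complex.arg ((Additive.toMul a : Circle) : ℂ))) = a
    rw [Circle.exp_arg]
    simp

lemma Circle.exp_zpow (x : ℝ) (n : ℤ) : Circle.exp x ^ n = Circle.exp (n * x) := by
  have h := map_zsmul Circle.expHom n x
  rw [zsmul_eq_mul] at h
  have h2 := congrArg Additive.toMul h
  rw [toMul_zsmul] at h2
  simpa using h2.symm

lemma circle_zeta_dvd {N : ℕ} (hN : 1 ≤ N) {k : ℤ}
    (h : Circle.exp (2 * π / N) ^ k = 1) : (N : ℤ) ∣ k := by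
  rw [Circle.exp_zpow, Circle.exp_eq_one] at h
  obtain ⟨n, hn⟩ := h
  have hNr : (N : ℝ) ≠ 0 := by positivity
  have hπ : (π : ℝ) ≠ 0 := Real.pi_ne_zero
  have hπ2 : (2 * π : ℝ) ≠ 0 := by positivity
  have h2 : (k : ℝ) * (2 * π) = (↑n * ↑N) * (2 * π) := by
    field_simp at hn
    linear_combination (2 * π) * hn
  have hk : (k : ℝ) = ↑n * ↑N := mul_right_cancel₀ hπ2 h2
  have : k = n * N := by exact_mod_cast hk
  exact ⟨n, by rw [this, mul_comm]⟩

lemma circle_zeta_pow {N : ℕ} (hN : 1 ≤ N) :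
    Circle.exp (2 * π / N) ^ N = 1 := by
  have hNr : (N : ℝ) ≠ 0 := by positivity
  rw [← zpow_natCast, Circle.exp_zpow]
  have : (N : ℝ) * (2 * π / N) = 2 * π := by field_simp
  push_cast
  rw [this, Circle.exp_two_pi]

/-- Characterization of `N`-PR sets: `E` is `N`-PR iff whenever `γ₁, …, γ_n ∈ E` are
distinct and `γ₁^{m₁} ⋯ γ_n^{m_n} = 1`, then `N ∣ m_i` for every `i`. -/
theorem nPR_iff {Γ : Type*} [CommGroup Γ] (N : ℕ) (hN : 1 ≤ N) (E : Set Γ) :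
    IsNPR N E ↔
      ∀ s : Finset Γ, ↑s ⊆ E → ∀ m : Γ → ℤ,
        (∏ γ ∈ s, γ ^ m γ) = 1 → ∀ γ ∈ s, (N : ℤ) ∣ m γ := by
  classical
  constructor
  · -- N-PR implies the divisibility condition
    intro h s hs m hprod γ₀ hγ₀
    set ζ : Circle := Circle.exp (2 * π / N) with hζ
    set φ : Γ → Circle := fun γ => if γ = γ₀ then ζ else 1 with hφdef
    obtain ⟨χ, hχ⟩ := h φ (by
      intro γ hγ
      by_cases hg : γ = γ₀ <;> simp [hφdef, hg, circle_zeta_pow hN, hζ])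
    have h1 : χ (∏ γ ∈ s, γ ^ m γ) = 1 := by rw [hprod, map_one]
    rw [map_prod] at h1
    simp_rw [map_zpow] at h1
    have h2 : ∏ γ ∈ s, χ γ ^ m γ = χ γ₀ ^ m γ₀ :=
      Finset.prod_eq_single_of_mem γ₀ hγ₀ (by
        intro γ hγ hne
        rw [hχ γ (hs hγ)]
        simp [hφdef, hne])
    rw [h2, hχ γ₀ (hs hγ₀)] at h1
    simp only [hφdef, if_pos rfl] at h1
    exact circle_zeta_dvd hN h1
  · -- the divisibility condition implies N-PR
    intro h φ hφ
    set p : (E →₀ ℤ) →+ Additive Γ :=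
      Finsupp.liftAddHom fun γ : E => zmultiplesHom (Additive Γ) (Additive.ofMul (γ : Γ)) with hp
    set q : (E →₀ ℤ) →+ Additive Circle :=
      Finsupp.liftAddHom fun γ : E => zmultiplesHom (Additive Circle) (Additive.ofMul (φ γ))
      with hq
    have key : ∀ f : E →₀ ℤ, f ∈ p.ker → q f = 0 := by
      intro f hf
      rw [AddMonoidHom.mem_ker] at hf
      -- first, each coefficient is divisible by N
      have hdvd : ∀ γ ∈ f.support, (N : ℤ) ∣ f γ := by
        intro γ hγ
        set s : Finset Γ := f.support.image (Subtype.val) with hsdef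
        set m : Γ → ℤ := fun x => if hx : x ∈ E then f ⟨x, hx⟩ else 0 with hm
        have hsE : ↑s ⊆ E := by
          intro x hx
          simp only [hsdef, Finset.coe_image, Set.mem_image, Finset.mem_coe] at hx
          obtain ⟨y, _, rfl⟩ := hx
          exact y.2
        have hminj : ∀ γ ∈ f.support, (γ : Γ) ^ m (γ : Γ) = (γ : Γ) ^ f γ := by
          intro γ _
          congr 1
          simp only [hm]
          rw [dif_pos γ.2]
        have hpf : ∏ γ ∈ f.support, (γ : Γ) ^ f γ = 1 := by
          have h2 := congrArg Additive.toMul hf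
          rw [hp] at h2
          rw [Finsupp.liftAddHom_apply] at h2
          simp only [Finsupp.sum] at h2
          rw [toMul_sum] at h2
          simp only [zmultiplesHom_apply, toMul_zsmul, toMul_ofMul] at h2
          simpa using h2
        have hprod : ∏ x ∈ s, x ^ m x = 1 := by
          rw [hsdef, Finset.prod_image (by
            intro a _ b _ hab
            exact Subtype.val_injective hab)]
          rw [Finset.prod_congr rfl hminj]
          exact hpf
        have := h s hsE m hprod (γ : Γ) (by
          simp only [hsdef, Finset.mem_image]
          exact ⟨γ, hγ, rfl⟩)
        simpa [hm, γ.2] using this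
      -- now conclude that q f = 0
      rw [hq, Finsupp.liftAddHom_apply, Finsupp.sum]
      apply Finset.sum_eq_zero
      intro γ hγ
      obtain ⟨k, hk⟩ := hdvd γ hγ
      have h1 : φ (γ : Γ) ^ f γ = 1 := by
        rw [hk, zpow_mul, zpow_natCast, hφ _ γ.2, one_zpow]
      rw [zmultiplesHom_apply, ← ofMul_zpow, h1]
      rfl
    -- build the character on the range of p
    set ψ₀ : ((E →₀ ℤ) ⧸ p.ker) →+ Additive Circle := QuotientAddGroup.lift p.ker q (fun f hf => AddMonoidHom.mem_ker.mpr (key f hf)) with hψ₀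
    set iso := QuotientAddGroup.quotientKerEquivRange p with hiso
    set ψ : p.range →+ Additive Circle := ψ₀.comp iso.symm.toAddMonoidHom with hψ
    have baer : Module.Baer ℤ (Additive Circle) := Module.Baer.of_divisible _
    obtain ⟨χ', hχ'⟩ := baer.extension_property_addMonoidHom p.range.subtype
      Subtype.val_injective ψ
    refine ⟨MonoidHom.toAdditive.symm χ', ?_⟩
    intro γ hγ
    set x : E →₀ ℤ := Finsupp.single (⟨γ, hγ⟩ : E) 1 with hx
    have hpx : p x = Additive.ofMul γ := by
      rw [hp, hx, Finsupp.liftAddHom_apply_single, zmultiplesHom_apply, one_zsmul]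
    have hmem : Additive.ofMul γ ∈ p.range := ⟨x, hpx⟩
    have h1 : χ' (Additive.ofMul γ) = ψ ⟨Additive.ofMul γ, hmem⟩ := by
      have := DFunLike.congr_fun hχ' (⟨Additive.ofMul γ, hmem⟩ : p.range)
      simpa using this
    have h2 : iso.symm ⟨Additive.ofMul γ, hmem⟩ = QuotientAddGroup.mk x := by
      rw [AddEquiv.symm_apply_eq]
      apply Subtype.ext
      show Additive.ofMul γ = p x
      exact hpx.symm
    have h3 : ψ ⟨Additive.ofMul γ, hmem⟩ = q x := by
      rw [hψ, AddMonoidHom.comp_apply, AddEquiv.coe_toAddMonoidHom, h2, hψ₀,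
        QuotientAddGroup.lift_mk]
    have hqx : q x = Additive.ofMul (φ γ) := by
      rw [hq, hx, Finsupp.liftAddHom_apply_single, zmultiplesHom_apply, one_zsmul]
    show Additive.toMul (χ' (Additive.ofMul γ)) = φ γ
    rw [h1, h3, hqx]
    rfl
end

section
/- Let p be a prime, n ≥ 1, and let Γ = ⊕_{i ∈ I} C(p^∞) be a direct sum of copies of the Prüfer p-group (written additively). If E ⊆ Γ is p^n-PR, then the set E_{p^n} := {p^{n−1}·γ : γ ∈ E} is p-PR and has the same cardinality as E. Conversely, if E ⊆ Γ is p-PR and for each γ ∈ E one chooses ξ_γ ∈ Γ with p^{n−1}·ξ_γ = γ, then the set E_{1/p^n} := {ξ_γ : γ ∈ E} is p^n-PR and has the same cardinality as E. -/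
open scoped DirectSum

/-- A subset `E` of a discrete (additively written) abelian group `Γ` is `N`-PR
(`N`-pseudo-Rademacher) if every function `φ : E → 𝕋` taking values in the `N`-th roots of
unity is the restriction of a character of `Γ`. -/
def IsNPRAdd {Γ : Type*} [AddCommGroup Γ] (N : ℕ) (E : Set Γ) : Prop :=
  ∀ φ : Γ → Circle, (∀ γ ∈ E, φ γ ^ N = 1) →
    ∃ χ : AddChar Γ Circle, ∀ γ ∈ E, χ γ = φ γ

/-- The group `ℚ/ℤ`. -/
abbrev RatModInt : Type := ℚ ⧸ AddSubgroup.zmultiples (1 : ℚ)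

/-- The Prüfer `p`-group `C(p^∞)`, realized as the `p`-primary component of `ℚ/ℤ`. -/
def Prufer (p : ℕ) : AddSubgroup RatModInt where
  carrier := {x | ∃ k : ℕ, (p ^ k : ℕ) • x = 0}
  zero_mem' := ⟨0, smul_zero _⟩
  add_mem' := by
    rintro a b ⟨k, hk⟩ ⟨l, hl⟩
    have h1 : (p ^ (k + l) : ℕ) • a = 0 := by
      rw [pow_add, mul_comm, mul_smul, hk, smul_zero]
    have h2 : (p ^ (k + l) : ℕ) • b = 0 := by
      rw [pow_add, mul_smul, hl, smul_zero]
    exact ⟨k + l, by rw [smul_add, h1, h2, add_zero]⟩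
  neg_mem' := by
    rintro a ⟨k, hk⟩
    exact ⟨k, by rw [smul_neg, hk, neg_zero]⟩

open scoped Real

section CircleAux

lemma circle_exp_pow (k : ℕ) (t : ℝ) : Circle.exp t ^ k = Circle.exp (k * t) := by
  induction k with
  | zero => simp [Circle.exp_zero]
  | succ k ih =>
    rw [pow_succ, ih, ← Circle.exp_add]
    push_cast
    ring_nf

lemma circle_exists_pow_eq (m : ℕ) (hm : m ≠ 0) (z : Circle) : ∃ w : Circle, w ^ m = z := by
  refine ⟨Circle.exp (Complex.arg z / m), ?_⟩
  rw [circle_exp_pow]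
  have h : (m : ℝ) * (Complex.arg z / m) = Complex.arg z := by
    field_simp
  rw [h, Circle.exp_arg]

lemma circle_exists_nontrivial_root (p : ℕ) (hp : p.Prime) :
    ∃ ω : Circle, ω ^ p = 1 ∧ ω ≠ 1 := by
  refine ⟨Circle.exp (2 * π / p), ?_, ?_⟩
  · rw [circle_exp_pow]
    have hp0 : (p : ℝ) ≠ 0 := by exact_mod_cast hp.pos.ne'
    have h : (p : ℝ) * (2 * π / p) = 2 * π := by
      field_simp
    rw [h, Circle.exp_two_pi]
  · intro h
    rw [Circle.exp_eq_one] at h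
    obtain ⟨k, hk⟩ := h
    have hπ := Real.pi_pos
    have hp2 : (2 : ℝ) ≤ (p : ℝ) := by exact_mod_cast hp.two_le
    have hk' : (k : ℝ) * p = 1 := by
      have hp0 : (0 : ℝ) < p := by linarith
      field_simp at hk
      nlinarith [hk]
    rcases lt_trichotomy k 0 with h0 | h0 | h0
    · have hle : k ≤ -1 := by omega
      have : (k : ℝ) ≤ -1 := by exact_mod_cast hle
      nlinarith
    · simp [h0] at hk'
    · have : (1 : ℝ) ≤ (k : ℝ) := by exact_mod_cast h0
      nlinarith

end CircleAux

section Core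

variable {Γ : Type*} [AddCommGroup Γ]

/-- Lemma A: if `E` is `N`-PR and each `ξ γ` is mapped to `γ` by `m • ·`, then
`range ξ` is `N`-PR. -/
lemma isNPRAdd_range_of_smul_eq {N m : ℕ} {E : Set Γ} (hE : IsNPRAdd N E)
    (ξ : E → Γ) (hξ : ∀ γ : E, m • ξ γ = (γ : Γ)) :
    IsNPRAdd N (Set.range ξ) := by
  intro φ hφ
  classical
  set ψ : Γ → Circle := fun x => if h : x ∈ E then φ (ξ ⟨x, h⟩) else 1 with hψdef
  have hψE : ∀ γ : E, ψ (γ : Γ) = φ (ξ γ) := by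
    intro γ
    simp only [hψdef, dif_pos γ.2, Subtype.coe_eta]
  have hψtor : ∀ γ ∈ E, ψ γ ^ N = 1 := by
    intro γ hγ
    rw [hψE ⟨γ, hγ⟩]
    exact hφ _ ⟨⟨γ, hγ⟩, rfl⟩
  obtain ⟨χ, hχ⟩ := hE ψ hψtor
  refine ⟨χ ^ m, ?_⟩
  rintro _ ⟨γ, rfl⟩
  rw [AddChar.pow_apply, ← AddChar.map_nsmul_eq_pow, hξ, hχ _ γ.2, hψE]

/-- Lemma B: if `E` is `p`-PR and `p^m • ξ γ = γ`, then `range ξ` is `p^(m+1)`-PR. -/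
lemma isNPRAdd_pow_range {p : ℕ} {E : Set Γ} (hE : IsNPRAdd p E) :
    ∀ (m : ℕ) (ξ : E → Γ), (∀ γ : E, (p ^ m) • ξ γ = (γ : Γ)) →
      IsNPRAdd (p ^ (m + 1)) (Set.range ξ) := by
  intro m
  induction m with
  | zero =>
    intro ξ hξ φ hφ
    simp only [pow_zero, one_smul] at hξ
    have htor : ∀ γ ∈ E, φ γ ^ p = 1 := by
      intro γ hγ
      have := hφ γ ⟨⟨γ, hγ⟩, hξ _⟩
      simpa using this
    obtain ⟨χ, hχ⟩ := hE φ htor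
    refine ⟨χ, ?_⟩
    rintro _ ⟨γ, rfl⟩
    rw [hξ γ]
    exact hχ _ γ.2
  | succ m ih =>
    intro ξ hξ φ hφ
    classical
    set ξ' : E → Γ := fun γ => p • ξ γ with hξ'def
    have hξ' : ∀ γ : E, (p ^ m) • ξ' γ = (γ : Γ) := by
      intro γ
      rw [hξ'def]
      simp only []
      rw [smul_smul, ← pow_succ]
      exact hξ γ
    have hξ'inj : Function.Injective ξ' := by
      intro γ δ h
      have : (γ : Γ) = (δ : Γ) := by rw [← hξ' γ, ← hξ' δ, h]
      exact Subtype.ext this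
    set ψ : Γ → Circle :=
      fun x => if h : ∃ γ : E, ξ' γ = x then φ (ξ (Classical.choose h)) ^ p else 1 with hψdef
    have hψval : ∀ γ : E, ψ (ξ' γ) = φ (ξ γ) ^ p := by
      intro γ
      have hex : ∃ δ : E, ξ' δ = ξ' γ := ⟨γ, rfl⟩
      have hc : Classical.choose hex = γ := hξ'inj (Classical.choose_spec hex)
      simp only [hψdef, dif_pos hex, hc]
    have hφ' : ∀ x ∈ Set.range ξ', ψ x ^ (p ^ (m + 1)) = 1 := by
      rintro _ ⟨γ, rfl⟩
      rw [hψval, ← pow_mul, mul_comm, ← pow_succ]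
      exact hφ _ ⟨γ, rfl⟩
    obtain ⟨χ₀, hχ₀⟩ := ih ξ' hξ' ψ hφ'
    set ε : Γ → Circle := fun x => φ x / χ₀ x with hεdef
    have hε : ∀ x ∈ Set.range ξ, ε x ^ p = 1 := by
      rintro _ ⟨γ, rfl⟩
      have h1 : χ₀ (ξ' γ) = φ (ξ γ) ^ p := by rw [hχ₀ _ ⟨γ, rfl⟩, hψval]
      have h2 : χ₀ (ξ γ) ^ p = φ (ξ γ) ^ p := by
        rw [← AddChar.map_nsmul_eq_pow]
        exact h1
      rw [hεdef]
      simp only [div_pow, h2, div_self']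
    obtain ⟨η, hη⟩ := isNPRAdd_range_of_smul_eq hE ξ (fun γ => hξ γ) ε hε
    refine ⟨χ₀ * η, ?_⟩
    rintro _ ⟨γ, rfl⟩
    rw [AddChar.mul_apply, hη _ ⟨γ, rfl⟩, hεdef]
    simp only []
    rw [mul_comm, div_eq_mul_inv, mul_assoc, inv_mul_cancel, mul_one]

/-- Injectivity on a `p^n`-PR set of multiplication by `p^(n-1)`. -/
lemma injOn_smul_of_isNPRAdd {p n : ℕ} (hp : p.Prime) (hn : 1 ≤ n) {E : Set Γ}
    (hE : IsNPRAdd (p ^ n) E) :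
    Set.InjOn (fun γ : Γ => (p ^ (n - 1)) • γ) E := by
  classical
  intro a ha b hb hab
  by_contra hne
  simp only [] at hab
  obtain ⟨ω, hωp, hω1⟩ := circle_exists_nontrivial_root p hp
  obtain ⟨ζ, hζ⟩ := circle_exists_pow_eq (p ^ (n - 1)) (pow_ne_zero _ hp.pos.ne') ω
  set φ : Γ → Circle := fun x => if x = b then ζ else 1 with hφdef
  have htor : ∀ γ ∈ E, φ γ ^ (p ^ n) = 1 := by
    intro γ hγ
    rw [hφdef]
    by_cases h : γ = b
    · simp only [if_pos h]
      have hz : ζ ^ (p ^ (n - 1) * p) = 1 := by rw [pow_mul, hζ, hωp]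
      rwa [← pow_succ, Nat.sub_add_cancel hn] at hz
    · simp [h]
  obtain ⟨χ, hχ⟩ := hE φ htor
  have h1 : χ a = 1 := by rw [hχ a ha, hφdef]; simp [hne]
  have h2 : χ b = ζ := by rw [hχ b hb, hφdef]; simp
  have h3 : χ (a - b) ^ (p ^ (n - 1)) = 1 := by
    rw [← AddChar.map_nsmul_eq_pow, smul_sub, hab, sub_self, AddChar.map_zero_eq_one]
  rw [AddChar.map_sub_eq_div, h1, h2] at h3
  apply hω1
  rw [← hζ]
  have h4 : (ζ ^ (p ^ (n - 1)))⁻¹ = 1 := by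
    rw [← inv_pow]
    simpa [one_div] using h3
  exact inv_eq_one.mp h4

/-- Part 1 PR statement. -/
lemma isNPRAdd_image_smul {p n : ℕ} (hp : p.Prime) (hn : 1 ≤ n) {E : Set Γ}
    (hE : IsNPRAdd (p ^ n) E) :
    IsNPRAdd p ((fun γ => (p ^ (n - 1)) • γ) '' E) := by
  intro φ hφ
  have root : ∀ x : Γ, ∃ w : Circle, w ^ (p ^ (n - 1)) = φ ((p ^ (n - 1)) • x) :=
    fun x => circle_exists_pow_eq _ (pow_ne_zero _ hp.pos.ne') _
  choose ψ hψ using root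
  have htor : ∀ γ ∈ E, ψ γ ^ (p ^ n) = 1 := by
    intro γ hγ
    have h1 : ψ γ ^ (p ^ (n - 1) * p) = 1 := by
      rw [pow_mul, hψ]
      exact hφ _ ⟨γ, hγ, rfl⟩
    rwa [← pow_succ, Nat.sub_add_cancel hn] at h1
  obtain ⟨χ, hχ⟩ := hE ψ htor
  refine ⟨χ, ?_⟩
  rintro _ ⟨γ, hγ, rfl⟩
  simp only []
  rw [AddChar.map_nsmul_eq_pow, hχ γ hγ, hψ]

end Core


/-- In `Γ = ⊕ C(p^∞)`: if `E` is `p^n`-PR then `E_{p^n} = {p^{n-1}·γ : γ ∈ E}` is `p`-PR of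
the same cardinality; conversely, if `E` is `p`-PR and `ξ_γ` are chosen with
`p^{n-1}·ξ_γ = γ`, then `E_{1/p^n} = {ξ_γ : γ ∈ E}` is `p^n`-PR of the same cardinality. -/
theorem prufer_pPow_nPR_correspondence (p : ℕ) (hp : p.Prime) (n : ℕ) (hn : 1 ≤ n)
    {I : Type*} (E : Set (⨁ _ : I, ↥(Prufer p))) :
    (IsNPRAdd (p ^ n) E →
      IsNPRAdd p ((fun γ => (p ^ (n - 1) : ℕ) • γ) '' E) ∧
      Cardinal.mk ↥((fun γ => (p ^ (n - 1) : ℕ) • γ) '' E) = Cardinal.mk ↥E) ∧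
    (IsNPRAdd p E →
      ∀ ξ : E → (⨁ _ : I, ↥(Prufer p)),
        (∀ γ : E, (p ^ (n - 1) : ℕ) • ξ γ = (γ : ⨁ _ : I, ↥(Prufer p))) →
        IsNPRAdd (p ^ n) (Set.range ξ) ∧
        Cardinal.mk ↥(Set.range ξ) = Cardinal.mk ↥E) := by
  constructor
  · intro hE
    refine ⟨isNPRAdd_image_smul hp hn hE, ?_⟩
    exact Cardinal.mk_image_eq_of_injOn _ _ (injOn_smul_of_isNPRAdd hp hn hE)
  · intro hE ξ hξ
    have hNPR : IsNPRAdd (p ^ n) (Set.range ξ) := by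
      have h := isNPRAdd_pow_range hE (n - 1) ξ hξ
      rwa [Nat.sub_add_cancel hn] at h
    refine ⟨hNPR, ?_⟩
    have hinj : Function.Injective ξ := by
      intro γ δ h
      have hc : (γ : ⨁ _ : I, ↥(Prufer p)) = (δ : ⨁ _ : I, ↥(Prufer p)) := by
        rw [← hξ γ, ← hξ δ, h]
      exact Subtype.ext hc
    exact Cardinal.mk_range_eq ξ hinj
end
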